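/- Let I ⊂ ℝ be a bounded closed nondegenerate interval and f : I → ℝ∪{±∞} non-decreasing with f ∈ L^r(I) for some 1 ≤ r < ∞. Then for every real t, ‖ℓ_f⁻¹ − t‖_r = ‖f − t‖_r, where ℓ_f⁻¹ is the upper inverse of ℓ_f restricted to I. -/

import Mathlib

open Set MeasureTheory

/-- The auxiliary function `ℓ_f(t) = ½(min I + max I + λ({f < t}) − λ({f > t}))`
for a real-valued `f` on `I = [a,b]`. -/
noncomputable def ellR (a b : ℝ) (f : ℝ → ℝ) (t : ℝ) : ℝ :=
  (a + b + (volume {x | x ∈ Set.Icc a b ∧ f x < t}).toReal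
    - (volume {x | x ∈ Set.Icc a b ∧ t < f x}).toReal) / 2

/-- The upper inverse of `ℓ_f`. -/
noncomputable def ellInv (a b : ℝ) (f : ℝ → ℝ) (x : ℝ) : ℝ :=
  sSup {u : ℝ | ellR a b f u ≤ x}

/-! For monotone `f`, `f y < u` forces `[a, y] ⊆ {f < u}` and `{f > u} ⊆ [y, b]`, so
`ℓ_f(u) ≥ y`; symmetrically `u < f y` forces `ℓ_f(u) ≤ y`. At an interior continuity point `x`
of `f` these two bounds pin the supremum defining `ℓ_f⁻¹(x)` to `f x`. Monotone functions have
only countably many discontinuities, so `ℓ_f⁻¹ = f` almost everywhere on `[a, b]`, and the two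
`L^r` norms agree. -/

section

variable {a b : ℝ} {f : ℝ → ℝ}

lemma volume_setOf_mem_Icc_ne_top (P : ℝ → Prop) : volume {x | x ∈ Icc a b ∧ P x} ≠ ⊤ :=
  ((measure_mono fun _ hx => hx.1).trans_lt measure_Icc_lt_top).ne

lemma le_ellR_of_lt (hf : MonotoneOn f (Icc a b)) {u y : ℝ} (hy : y ∈ Icc a b) (hfy : f y < u) :
    y ≤ ellR a b f u := by
  have hbelow : y - a ≤ volume.real {x | x ∈ Icc a b ∧ f x < u} := by
    rw [← Real.volume_real_Icc_of_le hy.1]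
    refine measureReal_mono (fun z hz => ?_) (volume_setOf_mem_Icc_ne_top _)
    have hz' : z ∈ Icc a b := ⟨hz.1, hz.2.trans hy.2⟩
    exact ⟨hz', (hf hz' hy hz.2).trans_lt hfy⟩
  have habove : volume.real {x | x ∈ Icc a b ∧ u < f x} ≤ b - y := by
    rw [← Real.volume_real_Icc_of_le hy.2]
    refine measureReal_mono (fun z hz => ⟨le_of_not_gt fun hzy => ?_, hz.1.2⟩)
      measure_Icc_lt_top.ne
    exact hz.2.not_ge ((hf hz.1 hy hzy.le).trans hfy.le)
  simp only [ellR, ← measureReal_def]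
  linarith

lemma ellR_le_of_lt (hf : MonotoneOn f (Icc a b)) {u y : ℝ} (hy : y ∈ Icc a b) (hfy : u < f y) :
    ellR a b f u ≤ y := by
  have habove : b - y ≤ volume.real {x | x ∈ Icc a b ∧ u < f x} := by
    rw [← Real.volume_real_Icc_of_le hy.2]
    refine measureReal_mono (fun z hz => ?_) (volume_setOf_mem_Icc_ne_top _)
    have hz' : z ∈ Icc a b := ⟨hy.1.trans hz.1, hz.2⟩
    exact ⟨hz', hfy.trans_le (hf hy hz' hz.1)⟩
  have hbelow : volume.real {x | x ∈ Icc a b ∧ f x < u} ≤ y - a := by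
    rw [← Real.volume_real_Icc_of_le hy.1]
    refine measureReal_mono (fun z hz => ⟨hz.1.1, le_of_not_gt fun hyz => ?_⟩)
      measure_Icc_lt_top.ne
    exact hz.2.not_ge (hfy.le.trans (hf hy hz.1 hyz.le))
  simp only [ellR, ← measureReal_def]
  linarith

lemma ellInv_eq_of_continuousAt (hf : MonotoneOn f (Icc a b)) {x : ℝ} (hx : x ∈ Ioo a b)
    (hc : ContinuousAt f x) : ellInv a b f x = f x := by
  have hmem : ∀ u < f x, ellR a b f u ≤ x := by
    intro u hu
    obtain ⟨y, hfy, hy⟩ := ((hc.mono_left nhdsWithin_le_nhds).eventually (lt_mem_nhds hu)).and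
      (Ioo_mem_nhdsLT hx.1) |>.exists
    exact (ellR_le_of_lt hf (Ioo_subset_Icc_self ⟨hy.1, hy.2.trans hx.2⟩) hfy).trans hy.2.le
  refine csSup_eq_of_forall_le_of_forall_lt_exists_gt ⟨f x - 1, hmem _ (by linarith)⟩ ?_ ?_
  · intro u hu
    by_contra! hxu
    obtain ⟨y, hfy, hy⟩ := ((hc.mono_left nhdsWithin_le_nhds).eventually (gt_mem_nhds hxu)).and
      (Ioo_mem_nhdsGT hx.2) |>.exists
    have := le_ellR_of_lt hf (Ioo_subset_Icc_self ⟨hx.1.trans hy.1, hy.2⟩) hfy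
    exact (hy.1.trans_le this).not_ge hu
  · intro w hw
    exact ⟨(w + f x) / 2, hmem _ (by linarith), by linarith⟩

lemma ellInv_ae_eq (hf : MonotoneOn f (Icc a b)) :
    ellInv a b f =ᵐ[volume.restrict (Icc a b)] f := by
  rw [Filter.EventuallyEq, ← Measure.restrict_congr_set Ioo_ae_eq_Icc,
    ae_restrict_iff' measurableSet_Ioo]
  filter_upwards [((hf.mono Ioo_subset_Icc_self).countable_not_continuousWithinAt).ae_notMem
    volume] with x hcont hx
  have hc : ContinuousWithinAt f (Ioo a b) x := by_contra fun h => hcont ⟨hx, h⟩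
  exact ellInv_eq_of_continuousAt hf hx
    ((continuousWithinAt_iff_continuousAt (Ioo_mem_nhds hx.1 hx.2)).1 hc)

end

theorem stmt5_general (a b : ℝ) (f : ℝ → ℝ)
    (hf : MonotoneOn f (Set.Icc a b)) (r : ℝ) :
    ∀ t : ℝ,
      eLpNorm (fun x => ellInv a b f x - t) (ENNReal.ofReal r) (volume.restrict (Set.Icc a b))
        = eLpNorm (fun x => f x - t) (ENNReal.ofReal r) (volume.restrict (Set.Icc a b)) :=
  fun t => eLpNorm_congr_ae ((ellInv_ae_eq hf).fun_comp (· - t))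

theorem stmt5 (a b : ℝ) (hab : a < b) (f : ℝ → ℝ)
    (hf : MonotoneOn f (Set.Icc a b)) (r : ℝ) (hr : 1 ≤ r)
    (hLr : MemLp f (ENNReal.ofReal r) (volume.restrict (Set.Icc a b))) :
    ∀ t : ℝ,
      eLpNorm (fun x => ellInv a b f x - t) (ENNReal.ofReal r) (volume.restrict (Set.Icc a b))
        = eLpNorm (fun x => f x - t) (ENNReal.ofReal r) (volume.restrict (Set.Icc a b)) :=
  stmt5_general a b f hf r
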